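/- The move H7 is derivable from the homotopy moves: for all words x, y, z, t and distinct letters A, B, C not occurring in them, the word xAByACzCBt is homotopic to xBAyCAzBCt. -/

import Mathlib

/-!
Insert the cancelling pairs `P Q … Q P` and `R S … S R` of fresh letters by H2, apply H3
backwards to the triple `A, S, Q`, and cancel the pairs `S B … B S` and `Q C … C Q` by H2.
This leaves `x R A y P A z R P t`, which is the target word with `B, C` renamed to `R, P`.
-/

/-- A Gauss word: every letter that occurs, occurs exactly twice. -/
def IsGauss (w : List ℕ) : Prop := ∀ a ∈ w, w.count a = 2

/-- Rank of a word: the number of distinct letters occurring in it. -/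
def rank (w : List ℕ) : ℕ := w.dedup.length

/-- Two words are isomorphic if one is obtained from the other by an
injective (hence bijective onto its image) relabeling of letters. -/
def Isomorphic (w₁ w₂ : List ℕ) : Prop :=
  ∃ f : ℕ → ℕ, Function.Injective f ∧ w₂ = w₁.map f

/-- One step: an isomorphism or a homotopy move H1, H2, H3. -/
inductive Move : List ℕ → List ℕ → Prop
  | iso {w₁ w₂ : List ℕ} : Isomorphic w₁ w₂ → Move w₁ w₂
  | h1 (x y : List ℕ) (A : ℕ) (hA : A ∉ x ++ y) :
      Move (x ++ [A, A] ++ y) (x ++ y)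
  | h2 (x y z : List ℕ) (A B : ℕ) (hAB : A ≠ B)
      (hA : A ∉ x ++ y ++ z) (hB : B ∉ x ++ y ++ z) :
      Move (x ++ [A, B] ++ y ++ [B, A] ++ z) (x ++ y ++ z)
  | h3 (x y z t : List ℕ) (A B C : ℕ)
      (hAB : A ≠ B) (hAC : A ≠ C) (hBC : B ≠ C)
      (hA : A ∉ x ++ y ++ z ++ t) (hB : B ∉ x ++ y ++ z ++ t)
      (hC : C ∉ x ++ y ++ z ++ t) :
      Move (x ++ [A, B] ++ y ++ [A, C] ++ z ++ [B, C] ++ t)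
           (x ++ [B, A] ++ y ++ [C, A] ++ z ++ [C, B] ++ t)

/-- Homotopy: the equivalence relation generated by isomorphisms and H1–H3. -/
def Homotopic : List ℕ → List ℕ → Prop := Relation.EqvGen Move

theorem Homotopic.of_move {u v : List ℕ} (h : Move u v) : Homotopic u v := .rel _ _ h

theorem Homotopic.symm {u v : List ℕ} (h : Homotopic u v) : Homotopic v u :=
  Relation.EqvGen.symm _ _ h

theorem Homotopic.trans {u v w : List ℕ} (h : Homotopic u v) (h' : Homotopic v w) :
    Homotopic u w :=
  Relation.EqvGen.trans _ _ _ h h'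

infix:50 " ≈ₕ " => Homotopic

instance : Trans Homotopic Homotopic Homotopic := ⟨Homotopic.trans⟩

theorem Homotopic.of_move_of_eq {u v u' v' : List ℕ} (h : Move u' v') (hu : u = u')
    (hv : v = v') : Homotopic u v :=
  hu ▸ hv ▸ .of_move h

theorem List.map_swap_of_notMem {l : List ℕ} {a b : ℕ} (ha : a ∉ l) (hb : b ∉ l) :
    l.map (Equiv.swap a b) = l :=
  (List.map_congr_left fun _ hc => Equiv.swap_apply_of_ne_of_ne (ne_of_mem_of_not_mem hc ha)
    (ne_of_mem_of_not_mem hc hb)).trans (List.map_id l)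

theorem Homotopic.map_swap (w : List ℕ) (a b : ℕ) : Homotopic w (w.map (Equiv.swap a b)) :=
  .of_move (.iso ⟨_, (Equiv.swap a b).injective, rfl⟩)

theorem homotopic_h7_of_fresh {x y z t : List ℕ} {A B C P Q R S : ℕ}
    (hAB : A ≠ B) (hAC : A ≠ C) (hBC : B ≠ C)
    (hA : A ∉ x ++ y ++ z ++ t) (hB : B ∉ x ++ y ++ z ++ t) (hC : C ∉ x ++ y ++ z ++ t)
    (hPQRS : [P, Q, R, S].Nodup) (hfresh : ∀ L ∈ [P, Q, R, S], L ∉ x ++ y ++ z ++ t ++ [A, B, C]) :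
    Homotopic (x ++ [A, B] ++ y ++ [A, C] ++ z ++ [C, B] ++ t)
      (x ++ [B, A] ++ y ++ [C, A] ++ z ++ [B, C] ++ t) := by
  simp only [List.mem_append, List.mem_cons, List.not_mem_nil, or_false, not_or,
    List.nodup_cons, List.nodup_nil, forall_eq_or_imp, forall_eq, and_true]
    at hA hB hC hPQRS hfresh
  calc x ++ [A, B] ++ y ++ [A, C] ++ z ++ [C, B] ++ t
    _ ≈ₕ x ++ [A, B] ++ y ++ [P, Q, A, C] ++ z ++ [C, B, Q, P] ++ t :=
      .symm <| .of_move_of_eq (.h2 (x ++ [A, B] ++ y) ([A, C] ++ z ++ [C, B]) t P Q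
        (by grind) (by grind) (by grind)) (by simp) (by simp)
    _ ≈ₕ x ++ [R, S, A, B] ++ y ++ [P, Q, A, C] ++ z ++ [C, B, Q, S, R, P] ++ t :=
      .symm <| .of_move_of_eq (.h2 x ([A, B] ++ y ++ [P, Q, A, C] ++ z ++ [C, B, Q]) ([P] ++ t) R S
        (by grind) (by grind) (by grind)) (by simp) (by simp)
    _ ≈ₕ x ++ [R, A, S, B] ++ y ++ [P, A, Q, C] ++ z ++ [C, B, S, Q, R, P] ++ t :=
      .symm <| .of_move_of_eq (.h3 (x ++ [R]) ([B] ++ y ++ [P]) ([C] ++ z ++ [C, B]) ([R, P] ++ t)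
        A S Q (by grind) (by grind) (by grind) (by grind) (by grind) (by grind))
        (by simp) (by simp)
    _ ≈ₕ x ++ [R, A] ++ y ++ [P, A, Q, C] ++ z ++ [C, Q, R, P] ++ t :=
      .of_move_of_eq (.h2 (x ++ [R, A]) (y ++ [P, A, Q, C] ++ z ++ [C]) ([Q, R, P] ++ t) S B
        (by grind) (by grind) (by grind)) (by simp) (by simp)
    _ ≈ₕ x ++ [R, A] ++ y ++ [P, A] ++ z ++ [R, P] ++ t :=
      .of_move_of_eq (.h2 (x ++ [R, A] ++ y ++ [P, A]) z ([R, P] ++ t) Q C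
        (by grind) (by grind) (by grind)) (by simp) (by simp)
    _ ≈ₕ x ++ [B, A] ++ y ++ [P, A] ++ z ++ [B, P] ++ t := by
      convert Homotopic.map_swap _ R B using 1
      simp only [List.map_append, List.map_cons, List.map_nil, Equiv.swap_apply_left]
      grind [List.map_swap_of_notMem, Equiv.swap_apply_of_ne_of_ne]
    _ ≈ₕ x ++ [B, A] ++ y ++ [C, A] ++ z ++ [B, C] ++ t := by
      convert Homotopic.map_swap _ P C using 1
      simp only [List.map_append, List.map_cons, List.map_nil, Equiv.swap_apply_left]
      grind [List.map_swap_of_notMem, Equiv.swap_apply_of_ne_of_ne]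

/-- H7 is derivable: xAByACzCBt is homotopic to xBAyCAzBCt. -/
theorem h7_derivable (x y z t : List ℕ) (A B C : ℕ)
    (hAB : A ≠ B) (hAC : A ≠ C) (hBC : B ≠ C)
    (hA : A ∉ x ++ y ++ z ++ t) (hB : B ∉ x ++ y ++ z ++ t)
    (hC : C ∉ x ++ y ++ z ++ t) :
    Homotopic (x ++ [A, B] ++ y ++ [A, C] ++ z ++ [C, B] ++ t)
              (x ++ [B, A] ++ y ++ [C, A] ++ z ++ [B, C] ++ t) := by
  obtain ⟨n, hn⟩ : ∃ n, ∀ a ∈ x ++ y ++ z ++ t ++ [A, B, C], a < n :=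
    ⟨_, fun _ ha => Nat.lt_succ_of_le (List.le_sum_of_mem ha)⟩
  refine homotopic_h7_of_fresh (P := n) (Q := n + 1) (R := n + 2) (S := n + 3)
    hAB hAC hBC hA hB hC (by simp) fun L hL hmem => ?_
  have := hn L hmem
  simp only [List.mem_cons, List.not_mem_nil, or_false] at hL
  omega
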